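/- Let S ⊆ S^{ℓ−1} be a finite set of unit vectors in ℝ^ℓ with min_{‖x‖=1} max_{u∈S} uᵀx = θ > 0. For a tensor T ∈ ℝ^{ℓ×m×n}, consider M = max{⟨T, Z⟩ : Z ∈ ℝ^{ℓ×m×n}, ‖Z(x,•,•)‖_σ ≤ 1 for all x ∈ S}, where Z(x,•,•) = Σ_i x_i Z_i and ‖·‖_σ denotes the matrix spectral norm. Then ‖T‖_* ≤ M ≤ ‖T‖_*/θ, where ‖T‖_* is the tensor nuclear norm. -/

import Mathlib

/-!
Every tensor of spectral norm at most one has all slices `Z(u,•,•)` of spectral norm at most one,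
so the relaxation only enlarges the feasible set: `‖T‖_* ≤ M`. Conversely, if `Z` is feasible for
`M` and `y`, `z` are unit vectors, the vector `w = (Z_i(y, z))_i` satisfies `⟨u, w⟩ ≤ 1` for all
`u ∈ S`; testing the covering property of `S` on the direction `w / ‖w‖` gives `θ ‖w‖ ≤ 1`, hence
`θ Z(x, y, z) = θ ⟨x, w⟩ ≤ 1`. Thus `θ Z` is feasible for the dual description of `‖T‖_*`, and
`θ M ≤ ‖T‖_*`.
-/

open Finset

noncomputable section

abbrev E (n : ℕ) := EuclideanSpace ℝ (Fin n)

/-- The bilinear form `yᵀ A z`. -/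
def bil {m n : ℕ} (A : Matrix (Fin m) (Fin n) ℝ) (y : E m) (z : E n) : ℝ :=
  ∑ j, ∑ k, y j * A j k * z k

/-- Values of the trilinear form `⟨T, x⊗y⊗z⟩` over unit vectors; its greatest
element is the tensor spectral norm. -/
def specSet {l m n : ℕ} (T : Fin l → Matrix (Fin m) (Fin n) ℝ) : Set ℝ :=
  {v | ∃ x : E l, ∃ y : E m, ∃ z : E n, ‖x‖ = 1 ∧ ‖y‖ = 1 ∧ ‖z‖ = 1 ∧
    v = ∑ i, x i * bil (T i) y z}

/-- Frobenius inner product of two ℓ×m×n tensors given by slices. -/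
def tinner {l m n : ℕ} (T Z : Fin l → Matrix (Fin m) (Fin n) ℝ) : ℝ :=
  ∑ i, ∑ j, ∑ k, T i j k * Z i j k

open RealInnerProductSpace

lemma mul_norm_le_of_forall_inner_le {F : Type*} [NormedAddCommGroup F] [InnerProductSpace ℝ F]
    {S : Set F} {θ c : ℝ} (hS : ∀ x : F, ‖x‖ = 1 → ∃ u ∈ S, θ ≤ ⟪u, x⟫) {w : F}
    (hw : ∀ u ∈ S, ⟪u, w⟫ ≤ c) (hc : 0 ≤ c) : θ * ‖w‖ ≤ c := by
  rcases eq_or_ne w 0 with rfl | hw0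
  · simpa using hc
  have hpos : 0 < ‖w‖ := norm_pos_iff.2 hw0
  obtain ⟨u, hu, hθu⟩ := hS (‖w‖⁻¹ • w) (by rw [norm_smul, norm_inv, norm_norm,
    inv_mul_cancel₀ hpos.ne'])
  rw [inner_smul_right] at hθu
  calc θ * ‖w‖ ≤ (‖w‖⁻¹ * ⟪u, w⟫) * ‖w‖ := by gcongr
    _ = ⟪u, w⟫ := by field_simp
    _ ≤ c := hw u hu

lemma sum_mul_eq_inner {l : ℕ} (u x : E l) : ∑ i, u i * x i = ⟪u, x⟫ := by
  simp [PiLp.inner_apply, mul_comm]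

lemma bil_smul {m n : ℕ} (c : ℝ) (A : Matrix (Fin m) (Fin n) ℝ) (y : E m) (z : E n) :
    bil (c • A) y z = c * bil A y z := by
  simp only [bil, Matrix.smul_apply, smul_eq_mul, mul_sum]
  exact sum_congr rfl fun j _ => sum_congr rfl fun k _ => by ring

lemma bil_sum_smul {ι : Type*} [Fintype ι] {m n : ℕ} (c : ι → ℝ)
    (Z : ι → Matrix (Fin m) (Fin n) ℝ) (y : E m) (z : E n) :
    bil (∑ i, c i • Z i) y z = ∑ i, c i * bil (Z i) y z := by
  simp only [← bil_smul]
  simp only [bil, Matrix.sum_apply, mul_sum, sum_mul]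
  exact (sum_congr rfl fun _ _ => sum_comm).trans sum_comm

lemma tinner_smul {l m n : ℕ} (c : ℝ) (T Z : Fin l → Matrix (Fin m) (Fin n) ℝ) :
    tinner T (c • Z) = c * tinner T Z := by
  simp only [tinner, Pi.smul_apply, Matrix.smul_apply, smul_eq_mul, mul_sum]
  exact sum_congr rfl fun i _ => sum_congr rfl fun j _ => sum_congr rfl fun k _ => by ring

lemma mul_trilinear_le_one_of_forall_slice_le_one {l m n : ℕ} {S : Set (E l)} {θ : ℝ}
    (hθ : 0 ≤ θ) (hS : ∀ x : E l, ‖x‖ = 1 → ∃ u ∈ S, θ ≤ ∑ i, u i * x i)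
    {Z : Fin l → Matrix (Fin m) (Fin n) ℝ} {y : E m} {z : E n}
    (hZ : ∀ u ∈ S, bil (∑ i, u i • Z i) y z ≤ 1) {x : E l} (hx : ‖x‖ = 1) :
    θ * ∑ i, x i * bil (Z i) y z ≤ 1 := by
  set w : E l := WithLp.toLp 2 fun i => bil (Z i) y z
  have hθw : θ * ‖w‖ ≤ 1 := by
    refine mul_norm_le_of_forall_inner_le (S := S)
      (fun x hx => by simpa only [sum_mul_eq_inner] using hS x hx) (fun u hu => ?_) zero_le_one
    rw [← sum_mul_eq_inner, ← bil_sum_smul]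
    exact hZ u hu
  calc θ * ∑ i, x i * bil (Z i) y z = θ * ⟪x, w⟫ := by rw [← sum_mul_eq_inner]
    _ ≤ θ * ‖w‖ := by gcongr; simpa [hx] using real_inner_le_norm x w
    _ ≤ 1 := hθw

theorem stmt11_general {l m n : ℕ} (S : Set (E l))
    (hSunit : ∀ u ∈ S, ‖u‖ = 1)
    (θ : ℝ) (hθ : 0 < θ)
    -- min over unit x of (max over u ∈ S of uᵀx) equals θ:
    (hθlb : ∀ x : E l, ‖x‖ = 1 → ∃ u ∈ S, θ ≤ ∑ i, u i * x i)
    (T : Fin l → Matrix (Fin m) (Fin n) ℝ) (N M : ℝ)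
    -- N = ‖T‖_* via the dual characterization:
    (hN : IsGreatest {v : ℝ | ∃ Z : Fin l → Matrix (Fin m) (Fin n) ℝ,
      (∀ (x : E l) (y : E m) (z : E n), ‖x‖ = 1 → ‖y‖ = 1 → ‖z‖ = 1 →
        ∑ i, x i * bil (Z i) y z ≤ 1) ∧ v = tinner T Z} N)
    -- M = max ⟨T,Z⟩ subject to ‖Z(x,•,•)‖_σ ≤ 1 for all x ∈ S:
    (hM : IsGreatest {v : ℝ | ∃ Z : Fin l → Matrix (Fin m) (Fin n) ℝ,
      (∀ x ∈ S, ∀ (y : E m) (z : E n), ‖y‖ = 1 → ‖z‖ = 1 →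
        bil (∑ i, x i • Z i) y z ≤ 1) ∧ v = tinner T Z} M) :
    N ≤ M ∧ M ≤ N / θ := by
  constructor
  · obtain ⟨Z, hZ, rfl⟩ := hN.1
    refine hM.2 ⟨Z, fun x hx y z hy hz => ?_, rfl⟩
    rw [bil_sum_smul]
    exact hZ x y z (hSunit x hx) hy hz
  · obtain ⟨Z, hZ, rfl⟩ := hM.1
    rw [le_div_iff₀ hθ, mul_comm, ← tinner_smul]
    refine hN.2 ⟨θ • Z, fun x y z hx hy hz => ?_, rfl⟩
    simp only [Pi.smul_apply, bil_smul, mul_left_comm (x _), ← mul_sum]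
    exact mul_trilinear_le_one_of_forall_slice_le_one hθ.le hθlb
      (fun u hu => hZ u hu y z hy hz) hx

/-- relaxed dual SDP value M satisfies ‖T‖_* ≤ M ≤ ‖T‖_*/θ. -/
theorem stmt11 {l m n : ℕ} (S : Set (E l)) (hSfin : S.Finite)
    (hSunit : ∀ u ∈ S, ‖u‖ = 1)
    (θ : ℝ) (hθ : 0 < θ)
    -- min over unit x of (max over u ∈ S of uᵀx) equals θ:
    (hθlb : ∀ x : E l, ‖x‖ = 1 → ∃ u ∈ S, θ ≤ ∑ i, u i * x i)
    (hθatt : ∃ x : E l, ‖x‖ = 1 ∧ ∀ u ∈ S, ∑ i, u i * x i ≤ θ)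
    (T : Fin l → Matrix (Fin m) (Fin n) ℝ) (N M : ℝ)
    -- N = ‖T‖_* via the dual characterization:
    (hN : IsGreatest {v : ℝ | ∃ Z : Fin l → Matrix (Fin m) (Fin n) ℝ,
      (∀ (x : E l) (y : E m) (z : E n), ‖x‖ = 1 → ‖y‖ = 1 → ‖z‖ = 1 →
        ∑ i, x i * bil (Z i) y z ≤ 1) ∧ v = tinner T Z} N)
    -- M = max ⟨T,Z⟩ subject to ‖Z(x,•,•)‖_σ ≤ 1 for all x ∈ S:
    (hM : IsGreatest {v : ℝ | ∃ Z : Fin l → Matrix (Fin m) (Fin n) ℝ,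
      (∀ x ∈ S, ∀ (y : E m) (z : E n), ‖y‖ = 1 → ‖z‖ = 1 →
        bil (∑ i, x i • Z i) y z ≤ 1) ∧ v = tinner T Z} M) :
    N ≤ M ∧ M ≤ N / θ :=
  stmt11_general S hSunit θ hθ hθlb T N M hN hM
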